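/- arXiv:1110.3664 — 2 statements merged into one kernel-verified Lean document; each statement's English description precedes it below -/
import Mathlib

section
/- In the de Rham cohomology of y^2 = P(x) with P(x) = 4(x-t1)^3 - t2(x-t1) - t3 over R = ℚ[t1,t2,t3,1/Δ], the class of x^3 dx/y equals (3t1^2 + (3/20)t2)·(x dx/y) + (-2t1^3 + (1/10)t1t2 + (1/10)t3)·(dx/y) modulo exact forms. -/
/-!
Differentiating `y² = P(x)` gives `2y dy = P'(x) dx`, hence
`d((x + 4t1) y) = (2P(x) + (x + 4t1) P'(x)) dx / (2y)`. The numerator is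
`20x³ - (60t1² + 3t2) x + 40t1³ - 2t1t2 - 2t3`, so the relation holds with
`g = (x + 4t1) y / 10`.
-/

noncomputable section

/-- The discriminant `Δ = 27t3² - t2³` in `ℚ[t1,t2,t3]`. -/
def Δpoly : MvPolynomial (Fin 3) ℚ :=
  27 * MvPolynomial.X 2 ^ 2 - MvPolynomial.X 1 ^ 3

/-- `R = ℚ[t1,t2,t3, 1/Δ]`, the localization of `ℚ[t1,t2,t3]` away from `Δ`. -/
def RR : Type := Localization.Away Δpoly

instance : CommRing RR := inferInstanceAs (CommRing (Localization.Away Δpoly))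
instance : Algebra (MvPolynomial (Fin 3) ℚ) RR :=
  inferInstanceAs (Algebra (MvPolynomial (Fin 3) ℚ) (Localization.Away Δpoly))

/-- `t1, t2, t3` as elements of `R`. -/
def tv (i : Fin 3) : RR := algebraMap (MvPolynomial (Fin 3) ℚ) RR (MvPolynomial.X i)

/-- `P(x) = 4(x-t1)³ - t2(x-t1) - t3`, viewed in `R[x,y]`. -/
def Ppoly : MvPolynomial (Fin 2) RR :=
  4 * (MvPolynomial.X 0 - MvPolynomial.C (tv 0)) ^ 3
    - MvPolynomial.C (tv 1) * (MvPolynomial.X 0 - MvPolynomial.C (tv 0))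
    - MvPolynomial.C (tv 2)

/-- The coordinate ring `A = R[x,y]/(y² - P(x))` of the affine elliptic curve. -/
def AA : Type :=
  MvPolynomial (Fin 2) RR ⧸ Ideal.span {MvPolynomial.X 1 ^ 2 - Ppoly}

instance : CommRing AA :=
  inferInstanceAs (CommRing (MvPolynomial (Fin 2) RR ⧸ Ideal.span {MvPolynomial.X 1 ^ 2 - Ppoly}))
instance : Algebra RR AA :=
  inferInstanceAs (Algebra RR (MvPolynomial (Fin 2) RR ⧸ Ideal.span {MvPolynomial.X 1 ^ 2 - Ppoly}))

/-- The class of `y` in `A`. -/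
def ybar : AA :=
  Ideal.Quotient.mk (Ideal.span {MvPolynomial.X 1 ^ 2 - Ppoly}) (MvPolynomial.X 1)

/-- The class of `x` in `A`. -/
def xbar : AA :=
  Ideal.Quotient.mk (Ideal.span {MvPolynomial.X 1 ^ 2 - Ppoly}) (MvPolynomial.X 0)

/-- `A' = A[1/y]`, where the 1-forms `x^k dx/y` live. -/
def AA' : Type := Localization.Away ybar

instance : CommRing AA' := inferInstanceAs (CommRing (Localization.Away ybar))
instance : Algebra AA AA' := inferInstanceAs (Algebra AA (Localization.Away ybar))
instance : IsLocalization.Away ybar AA' :=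
  inferInstanceAs (IsLocalization.Away ybar (Localization.Away ybar))
instance : Algebra RR AA' := ((algebraMap AA AA').comp (algebraMap RR AA)).toAlgebra

/-- `x` as an element of `A'`. -/
def x' : AA' := algebraMap AA AA' xbar

/-- `1/y` as an element of `A'`. -/
def yinv : AA' := IsLocalization.Away.invSelf (S := AA') ybar

section DerivationOnCurve

open Polynomial

variable {R S M : Type*} [CommRing R] [CommRing S] [Algebra R S] [AddCommGroup M] [Module S M]
  [Module R M] (D : Derivation R S M)

theorem Derivation.map_ofNat (n : ℕ) [n.AtLeastTwo] : D (ofNat(n) : S) = 0 := by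
  simpa using D.map_natCast (OfNat.ofNat n)

theorem Derivation.two_smul_map_of_sq_eq_aeval {f : R[X]} {x y yinv : S} (hy : y * yinv = 1)
    (hcurve : y ^ 2 = aeval x f) :
    (2 : S) • D y = (yinv * aeval x (derivative f)) • D x := by
  have hsq : (2 * y) • D y = aeval x (derivative f) • D x := by
    rw [← D.map_aeval, ← hcurve, D.leibniz_pow, ← Nat.cast_smul_eq_nsmul S, smul_smul, pow_one]
    norm_num
  calc (2 : S) • D y = (yinv * (2 * y)) • D y := by
        rw [mul_left_comm, mul_comm yinv, hy, mul_one]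
    _ = _ := by rw [mul_smul, hsq, smul_smul]

theorem Derivation.weierstrass_reduction {a b c : R} {x y yinv : S} (hy : y * yinv = 1)
    (hcurve : y ^ 2 = 4 * (x - algebraMap R S a) ^ 3
      - algebraMap R S b * (x - algebraMap R S a) - algebraMap R S c) :
    ((20 * x ^ 3 - (60 * algebraMap R S a ^ 2 + 3 * algebraMap R S b) * x
        + 40 * algebraMap R S a ^ 3 - 2 * algebraMap R S a * algebraMap R S b
        - 2 * algebraMap R S c) * yinv) • D x
      = D (2 * (x + 4 * algebraMap R S a) * y) := by
  set f : R[X] := 4 * (X - C a) ^ 3 - C b * (X - C a) - C c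
  have hf : aeval x f = 4 * (x - algebraMap R S a) ^ 3
      - algebraMap R S b * (x - algebraMap R S a) - algebraMap R S c := by
    simp [f, _root_.map_ofNat]
  have hf' : aeval x (derivative f) = 12 * (x - algebraMap R S a) ^ 2 - algebraMap R S b := by
    simp only [f, derivative_sub, derivative_mul, derivative_ofNat, derivative_X_sub_C_pow,
      derivative_C, derivative_X, aeval_sub, aeval_X, aeval_C, map_mul, map_pow, _root_.map_ofNat,
      Nat.cast_ofNat, zero_mul, zero_add, sub_zero, mul_one]
    ring
  have hdy := D.two_smul_map_of_sq_eq_aeval hy (hcurve.trans hf.symm)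
  rw [hf'] at hdy
  have hdg : D (2 * (x + 4 * algebraMap R S a) * y)
      = (x + 4 * algebraMap R S a) • (2 : S) • D y + (2 * y) • D x := by
    simp only [leibniz, map_add, map_algebraMap, D.map_ofNat, smul_zero, add_zero, smul_smul]
    module
  rw [hdg, hdy, smul_smul, ← add_smul]
  congr 1
  linear_combination 2 * y * hy - 2 * yinv * hcurve

end DerivationOnCurve

-- Both sides are, definitionally, the images of `X 1 ^ 2` and `Ppoly` under the quotient map.
theorem ybar_sq : ybar ^ 2 = 4 * (xbar - algebraMap RR AA (tv 0)) ^ 3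
    - algebraMap RR AA (tv 1) * (xbar - algebraMap RR AA (tv 0)) - algebraMap RR AA (tv 2) :=
  Ideal.Quotient.eq.mpr (Ideal.subset_span (Set.mem_singleton _))

theorem algebraMap_ybar_sq : algebraMap AA AA' ybar ^ 2 = 4 * (x' - algebraMap RR AA' (tv 0)) ^ 3
    - algebraMap RR AA' (tv 1) * (x' - algebraMap RR AA' (tv 0)) - algebraMap RR AA' (tv 2) := by
  rw [← map_pow, ybar_sq]
  simp only [map_sub, map_mul, map_pow, map_ofNat]
  rfl

/-- In the de Rham cohomology of `y² = 4(x-t1)³ - t2(x-t1) - t3` over `R = ℚ[t1,t2,t3,1/Δ]`,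
`x³dx/y = (3t1² + (3/20)t2)·(x dx/y) + (-2t1³ + (1/10)t1t2 + (1/10)t3)·(dx/y)`: concretely,
the difference of the two sides of this relation is an exact relative 1-form `dg`. -/
theorem xcube_relation :
    ∃ g : AA',
      ((x' ^ 3
          - algebraMap RR AA' (3 * tv 0 ^ 2 +
              algebraMap (MvPolynomial (Fin 3) ℚ) RR (MvPolynomial.C (3 / 20 : ℚ)) * tv 1) * x'
          - algebraMap RR AA' (-(2 * tv 0 ^ 3) +
              algebraMap (MvPolynomial (Fin 3) ℚ) RR (MvPolynomial.C (1 / 10 : ℚ)) * tv 0 * tv 1 +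
              algebraMap (MvPolynomial (Fin 3) ℚ) RR (MvPolynomial.C (1 / 10 : ℚ)) * tv 2))
            * yinv) • (KaehlerDifferential.D RR AA' x') = KaehlerDifferential.D RR AA' g := by
  set D := KaehlerDifferential.D RR AA'
  set φ : ℚ →+* AA' := (algebraMap RR AA').comp
    ((algebraMap (MvPolynomial (Fin 3) ℚ) RR).comp MvPolynomial.C)
  have hφ (q : ℚ) :
      algebraMap RR AA' (algebraMap (MvPolynomial (Fin 3) ℚ) RR (MvPolynomial.C q)) = φ q := rfl
  have h20 : 20 * φ (1 / 20) = 1 := by rw [← map_ofNat φ, ← map_mul]; norm_num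
  have h3 : φ (3 / 20) = 3 * φ (1 / 20) := by rw [← map_ofNat φ, ← map_mul]; norm_num
  have h2 : φ (1 / 10) = 2 * φ (1 / 20) := by rw [← map_ofNat φ, ← map_mul]; norm_num
  have hy : algebraMap AA AA' ybar * yinv = 1 := IsLocalization.Away.mul_invSelf ybar
  refine ⟨algebraMap RR AA' (algebraMap (MvPolynomial (Fin 3) ℚ) RR (MvPolynomial.C (1 / 20)))
    * (2 * (x' + 4 * algebraMap RR AA' (tv 0)) * algebraMap AA AA' ybar), ?_⟩
  rw [D.leibniz, ← D.weierstrass_reduction hy algebraMap_ybar_sq, D.map_algebraMap, smul_zero,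
    add_zero, smul_smul]
  congr 1
  simp only [map_add, map_mul, map_neg, map_pow, map_ofNat, hφ, h3, h2]
  linear_combination (-(x' ^ 3 - 3 * algebraMap RR AA' (tv 0) ^ 2 * x'
    + 2 * algebraMap RR AA' (tv 0) ^ 3) * yinv) * h20

end
end

section
/- Let g(z) be a local holomorphic solution on ℍ to the Ramanujan system g1' = g1^2 - g2/12, g2' = 4g1g2 - 6g3, g3' = 6g1g3 - g2^2/3, and suppose g1, g2, g3 also satisfy the functional equations (cz+d)^{-4}g2((az+b)/(cz+d)) = g2(z) and (cz+d)^{-6}g3((az+b)/(cz+d)) = g3(z) and (cz+d)^{-2}g1((az+b)/(cz+d)) = g1(z) + c(cz+d)^{-1} for a single fixed A = [[a,b],[c,d]] ∈ SL(2,ℝ). Then the functions φ1(z) = (cz+d)^{-2}g1(Az) - c(cz+d)^{-1}, φ2(z) = (cz+d)^{-4}g2(Az), φ3(z) = (cz+d)^{-6}g3(Az) also satisfy the Ramanujan system (this holds for arbitrary A ∈ SL(2,ℂ) and arbitrary solutions g). -/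
/-!
Since `A'(z) = (cz+d)⁻²` when `det A = 1`, the derivative of the weight-`k` slash
`w ↦ (cw+d)⁻ᵏ g(Aw)` is `(cz+d)⁻ᵏ⁻² g'(Az)` plus the correction `-k c (cz+d)⁻¹` times the
slashed function. Slashing `g₁, g₂, g₃` in weights 2, 4, 6, these corrections are exactly
absorbed, in each equation of the system, by the shift `-c (cz+d)⁻¹` in `φ₁`.
-/

variable {𝕜 : Type*} [NontriviallyNormedField 𝕜]

theorem hasDerivAt_mul_add (c d z : 𝕜) : HasDerivAt (fun w => c * w + d) c z := by
  simpa using ((hasDerivAt_id z).const_mul c).add_const d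

theorem hasDerivAt_moebius {a b c d : 𝕜} (hdet : a * d - b * c = 1) {z : 𝕜}
    (hz : c * z + d ≠ 0) :
    HasDerivAt (fun w => (a * w + b) / (c * w + d)) ((c * z + d) ^ 2)⁻¹ z := by
  have hwronskian : a * (c * z + d) - (a * z + b) * c = 1 := by linear_combination hdet
  simpa [hwronskian, one_div, Pi.div_def] using
    (hasDerivAt_mul_add a b z).div (hasDerivAt_mul_add c d z) hz

theorem hasDerivAt_slash {a b c d : 𝕜} (hdet : a * d - b * c = 1) {z : 𝕜}
    (hz : c * z + d ≠ 0) (k : ℕ) {g : 𝕜 → 𝕜} {g' : 𝕜}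
    (hg : HasDerivAt g g' ((a * z + b) / (c * z + d))) :
    HasDerivAt (fun w => ((c * w + d) ^ k)⁻¹ * g ((a * w + b) / (c * w + d)))
      (((c * z + d) ^ (k + 2))⁻¹ * g'
        - k * c * (c * z + d)⁻¹ * (((c * z + d) ^ k)⁻¹ * g ((a * z + b) / (c * z + d)))) z := by
  have hfactor : HasDerivAt (fun w => ((c * w + d) ^ k)⁻¹)
      (-(k * (c * z + d) ^ (k - 1) * c) / ((c * z + d) ^ k) ^ 2) z :=
    ((hasDerivAt_mul_add c d z).pow k).inv (pow_ne_zero k hz)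
  refine (hfactor.mul (hg.comp z (hasDerivAt_moebius hdet hz))).congr_deriv ?_
  simp only [Function.comp_apply]
  generalize g ((a * z + b) / (c * z + d)) = G
  generalize c * z + d = J at hz ⊢
  rcases k with _ | k
  · simp [mul_comm]
  · rw [Nat.add_sub_cancel]
    push_cast
    field_simp
    ring

theorem hasDerivAt_c_mul_inv_denom {c d z : 𝕜} (hz : c * z + d ≠ 0) :
    HasDerivAt (fun w => c * (c * w + d)⁻¹) (-(c * (c * z + d)⁻¹) ^ 2) z := by
  refine (((hasDerivAt_mul_add c d z).inv hz).const_mul c).congr_deriv ?_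
  field_simp

theorem ramanujan_sl2_invariance_general (a b c d : ℂ) (hdet : a * d - b * c = 1)
    (U : Set ℂ) (g1 g2 g3 : ℂ → ℂ)
    (h1 : ∀ w ∈ U, HasDerivAt g1 ((g1 w) ^ 2 - g2 w / 12) w)
    (h2 : ∀ w ∈ U, HasDerivAt g2 (4 * g1 w * g2 w - 6 * g3 w) w)
    (h3 : ∀ w ∈ U, HasDerivAt g3 (6 * g1 w * g3 w - (g2 w) ^ 2 / 3) w)
    (z : ℂ) (hz : c * z + d ≠ 0) (hzU : (a * z + b) / (c * z + d) ∈ U) :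
    HasDerivAt (fun w => ((c * w + d) ^ 2)⁻¹ * g1 ((a * w + b) / (c * w + d))
        - c * (c * w + d)⁻¹)
      ((((c * z + d) ^ 2)⁻¹ * g1 ((a * z + b) / (c * z + d)) - c * (c * z + d)⁻¹) ^ 2
        - (((c * z + d) ^ 4)⁻¹ * g2 ((a * z + b) / (c * z + d))) / 12) z ∧
    HasDerivAt (fun w => ((c * w + d) ^ 4)⁻¹ * g2 ((a * w + b) / (c * w + d)))
      (4 * (((c * z + d) ^ 2)⁻¹ * g1 ((a * z + b) / (c * z + d)) - c * (c * z + d)⁻¹)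
          * (((c * z + d) ^ 4)⁻¹ * g2 ((a * z + b) / (c * z + d)))
        - 6 * (((c * z + d) ^ 6)⁻¹ * g3 ((a * z + b) / (c * z + d)))) z ∧
    HasDerivAt (fun w => ((c * w + d) ^ 6)⁻¹ * g3 ((a * w + b) / (c * w + d)))
      (6 * (((c * z + d) ^ 2)⁻¹ * g1 ((a * z + b) / (c * z + d)) - c * (c * z + d)⁻¹)
          * (((c * z + d) ^ 6)⁻¹ * g3 ((a * z + b) / (c * z + d)))
        - (((c * z + d) ^ 4)⁻¹ * g2 ((a * z + b) / (c * z + d))) ^ 2 / 3) z := by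
  have hφ1 := (hasDerivAt_slash hdet hz 2 (h1 _ hzU)).sub (hasDerivAt_c_mul_inv_denom hz)
  have hφ2 := hasDerivAt_slash hdet hz 4 (h2 _ hzU)
  have hφ3 := hasDerivAt_slash hdet hz 6 (h3 _ hzU)
  refine ⟨hφ1.congr_deriv ?_, hφ2.congr_deriv ?_, hφ3.congr_deriv ?_⟩ <;>
  · push_cast
    field_simp
    ring

/-- If `(g1,g2,g3)` is a holomorphic solution of the Ramanujan system on an open set `U`, and
`A = [[a,b],[c,d]] ∈ SL(2,ℂ)`, then `φ1 = (cz+d)⁻²g1(Az) - c(cz+d)⁻¹`, `φ2 = (cz+d)⁻⁴g2(Az)`,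
`φ3 = (cz+d)⁻⁶g3(Az)` is again a solution of the Ramanujan system (where `cz+d ≠ 0` and
`Az = (az+b)/(cz+d) ∈ U`). -/
theorem ramanujan_sl2_invariance (a b c d : ℂ) (hdet : a * d - b * c = 1)
    (U : Set ℂ) (hU : IsOpen U) (g1 g2 g3 : ℂ → ℂ)
    (h1 : ∀ w ∈ U, HasDerivAt g1 ((g1 w) ^ 2 - g2 w / 12) w)
    (h2 : ∀ w ∈ U, HasDerivAt g2 (4 * g1 w * g2 w - 6 * g3 w) w)
    (h3 : ∀ w ∈ U, HasDerivAt g3 (6 * g1 w * g3 w - (g2 w) ^ 2 / 3) w)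
    (z : ℂ) (hz : c * z + d ≠ 0) (hzU : (a * z + b) / (c * z + d) ∈ U) :
    HasDerivAt (fun w => ((c * w + d) ^ 2)⁻¹ * g1 ((a * w + b) / (c * w + d))
        - c * (c * w + d)⁻¹)
      ((((c * z + d) ^ 2)⁻¹ * g1 ((a * z + b) / (c * z + d)) - c * (c * z + d)⁻¹) ^ 2
        - (((c * z + d) ^ 4)⁻¹ * g2 ((a * z + b) / (c * z + d))) / 12) z ∧
    HasDerivAt (fun w => ((c * w + d) ^ 4)⁻¹ * g2 ((a * w + b) / (c * w + d)))
      (4 * (((c * z + d) ^ 2)⁻¹ * g1 ((a * z + b) / (c * z + d)) - c * (c * z + d)⁻¹)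
          * (((c * z + d) ^ 4)⁻¹ * g2 ((a * z + b) / (c * z + d)))
        - 6 * (((c * z + d) ^ 6)⁻¹ * g3 ((a * z + b) / (c * z + d)))) z ∧
    HasDerivAt (fun w => ((c * w + d) ^ 6)⁻¹ * g3 ((a * w + b) / (c * w + d)))
      (6 * (((c * z + d) ^ 2)⁻¹ * g1 ((a * z + b) / (c * z + d)) - c * (c * z + d)⁻¹)
          * (((c * z + d) ^ 6)⁻¹ * g3 ((a * z + b) / (c * z + d)))
        - (((c * z + d) ^ 4)⁻¹ * g2 ((a * z + b) / (c * z + d))) ^ 2 / 3) z :=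
  ramanujan_sl2_invariance_general a b c d hdet U g1 g2 g3 h1 h2 h3 z hz hzU
end
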